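/- arXiv:1609.00606 — 2 statements merged into one kernel-verified Lean document; each statement's English description precedes it below -/
import Mathlib

section
/- Assume the V structure. If the effects of X on C are of opposite signs across the two levels of Y, specifically p_{C=1|11} > p_{C=1|01} and p_{C=1|10} < p_{C=1|00}, then P(C=1) > 0, P(C=0) > 0, cov(X, Y | C=1) > 0, and cov(X, Y | C=0) < 0. -/
open MeasureTheory ProbabilityTheory

variable {Ω : Type*} [MeasurableSpace Ω]

/-- The event that the random variable `X` takes the value `x`. -/
def ev (X : Ω → ℝ) (x : ℝ) : Set Ω := {ω | X ω = x}

/-- The probability of an event, as a real number. -/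
noncomputable def pr (P : Measure Ω) (s : Set Ω) : ℝ := (P s).toReal

/-- The conditional probability `P(s | t)`, as a real number. -/
noncomputable def cpr (P : Measure Ω) (s t : Set Ω) : ℝ := pr (P[|t]) s

/-- The covariance of two real-valued random variables. -/
noncomputable def rcov (P : Measure Ω) (X Y : Ω → ℝ) : ℝ :=
  ∫ ω, (X ω - ∫ ω', X ω' ∂P) * (Y ω - ∫ ω', Y ω' ∂P) ∂P

/-- The conditional covariance of two real-valued random variables given an event. -/
noncomputable def covCond (P : Measure Ω) (X Y : Ω → ℝ) (t : Set Ω) : ℝ :=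
  rcov (P[|t]) X Y

/-- The conditional variance of a real-valued random variable given an event. -/
noncomputable def varCond (P : Measure Ω) (X : Ω → ℝ) (t : Set Ω) : ℝ :=
  covCond P X X t

/-- A measurable `{0,1}`-valued random variable. -/
def IsBin (X : Ω → ℝ) : Prop := Measurable X ∧ ∀ ω, X ω = 0 ∨ X ω = 1

/-!
For `{0,1}`-valued `X`, `Y` the covariance under any probability measure is the cross difference
`P(11) P(00) - P(10) P(01)` of the cell probabilities, and conditioning on an event `t` only
rescales the cells of `P.restrict t` by `1 / P(t)`, so the sign of `cov(X, Y | t)` is the sign of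
that cross difference for `P.restrict t`. Writing `P(X=x, Y=y, t) = P(t | xy) P(X=x) P(Y=y)`,
independence gives `P(10) P(01) = P(11) P(00)`, so the cross difference for `t = {C = 1}` is a
positive multiple of `p₁₁ p₀₀ - p₁₀ p₀₁`, positive under the hypotheses. For `t = {C = 0}` the
conditional probabilities are `1 - p_xy`, for which the same inequalities hold reversed. A nonzero
cross difference for `P.restrict t` forces `P(t) > 0`.
-/

open scoped ENNReal

lemma pr_eq_measureReal (μ : Measure Ω) (s : Set Ω) : pr μ s = μ.real s := rfl

lemma pr_nonneg (P : Measure Ω) (s : Set Ω) : 0 ≤ pr P s := measureReal_nonneg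

lemma cpr_le_one (P : Measure Ω) (s t : Set Ω) : cpr P s t ≤ 1 := measureReal_le_one

namespace IsBin

variable {X Y : Ω → ℝ}

lemma measurableSet_ev (hX : IsBin X) (x : ℝ) : MeasurableSet (ev X x) :=
  hX.1 (measurableSet_singleton x)

lemma ev_zero (hX : IsBin X) : ev X 0 = (ev X 1)ᶜ := by
  ext ω
  rcases hX.2 ω with h | h <;> simp [ev, h]

lemma eq_indicator (hX : IsBin X) : X = (ev X 1).indicator 1 := by
  funext ω
  rcases hX.2 ω with h | h <;> simp [ev, h]

lemma mul (hX : IsBin X) (hY : IsBin Y) : IsBin (X * Y) :=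
  ⟨hX.1.mul hY.1, fun ω => by rcases hX.2 ω with h | h <;> simp [h, hY.2 ω]⟩

lemma ev_mul_one (hX : IsBin X) (hY : IsBin Y) : ev (X * Y) 1 = ev X 1 ∩ ev Y 1 := by
  ext ω
  rcases hX.2 ω with h | h <;> rcases hY.2 ω with h' | h' <;> simp [ev, h, h']

lemma memLp (hX : IsBin X) (p : ℝ≥0∞) (μ : Measure Ω) [IsFiniteMeasure μ] : MemLp X p μ :=
  MemLp.of_bound hX.1.aestronglyMeasurable 1
    (ae_of_all _ fun ω => by rcases hX.2 ω with h | h <;> simp [h])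

lemma integral_eq (hX : IsBin X) (μ : Measure Ω) [IsFiniteMeasure μ] :
    ∫ ω, X ω ∂μ = pr μ (ev X 1) := by
  conv_lhs => rw [hX.eq_indicator]
  simp [integral_indicator (hX.measurableSet_ev 1), pr_eq_measureReal]

lemma pr_inter_add (hX : IsBin X) (μ : Measure Ω) [IsFiniteMeasure μ] (s : Set Ω) :
    pr μ (s ∩ ev X 1) + pr μ (s ∩ ev X 0) = pr μ s := by
  rw [hX.ev_zero, pr_eq_measureReal, pr_eq_measureReal, pr_eq_measureReal, ← Set.sdiff_eq]
  exact measureReal_inter_add_sdiff (hX.measurableSet_ev 1)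

lemma pr_ev_zero (hX : IsBin X) (μ : Measure Ω) [IsProbabilityMeasure μ] :
    pr μ (ev X 0) = 1 - pr μ (ev X 1) := by
  rw [hX.ev_zero, pr_eq_measureReal, probReal_compl_eq_one_sub (hX.measurableSet_ev 1)]
  rfl

end IsBin

noncomputable def crossDet (μ : Measure Ω) (X Y : Ω → ℝ) : ℝ :=
  pr μ (ev X 1 ∩ ev Y 1) * pr μ (ev X 0 ∩ ev Y 0)
    - pr μ (ev X 1 ∩ ev Y 0) * pr μ (ev X 0 ∩ ev Y 1)

lemma crossDet_smul (c : ℝ≥0∞) (μ : Measure Ω) (X Y : Ω → ℝ) :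
    crossDet (c • μ) X Y = c.toReal ^ 2 * crossDet μ X Y := by
  simp only [crossDet, pr_eq_measureReal, measureReal_ennreal_smul_apply]
  ring

lemma crossDet_zero (X Y : Ω → ℝ) : crossDet (0 : Measure Ω) X Y = 0 := by
  simp [crossDet, pr_eq_measureReal]

variable {X Y : Ω → ℝ}

lemma rcov_eq_crossDet (hX : IsBin X) (hY : IsBin Y) (μ : Measure Ω) [IsProbabilityMeasure μ] :
    rcov μ X Y = crossDet μ X Y := by
  have hcov : rcov μ X Y = ∫ ω, (X * Y) ω ∂μ - (∫ ω, X ω ∂μ) * ∫ ω, Y ω ∂μ :=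
    covariance_eq_sub (hX.memLp 2 μ) (hY.memLp 2 μ)
  have hX1 := hY.pr_inter_add μ (ev X 1)
  have hX0 := hY.pr_inter_add μ (ev X 0)
  have hY1 : pr μ (ev X 1 ∩ ev Y 1) + pr μ (ev X 0 ∩ ev Y 1) = pr μ (ev Y 1) := by
    simpa only [Set.inter_comm (ev Y 1)] using hX.pr_inter_add μ (ev Y 1)
  have htotal : pr μ (ev X 1) + pr μ (ev X 0) = 1 := by
    rw [hX.pr_ev_zero]; ring
  rw [hcov, (hX.mul hY).integral_eq, hX.integral_eq, hY.integral_eq, hX.ev_mul_one hY, crossDet,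
    ← hY1, ← hX1]
  linear_combination -pr μ (ev X 1 ∩ ev Y 1) * (htotal + hX1 + hX0)

lemma covCond_eq_crossDet_restrict_div (hX : IsBin X) (hY : IsBin Y) (P : Measure Ω)
    [IsFiniteMeasure P] (t : Set Ω) :
    covCond P X Y t = crossDet (P.restrict t) X Y / pr P t ^ 2 := by
  by_cases ht : P t = 0
  · simp [covCond, rcov, cond_eq_zero_of_meas_eq_zero ht, pr, ht]
  have := cond_isProbabilityMeasure (μ := P) ht
  rw [covCond, rcov_eq_crossDet hX hY, ProbabilityTheory.cond, crossDet_smul,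
    ENNReal.toReal_inv, pr, div_eq_inv_mul, inv_pow]

lemma pr_pos_of_crossDet_restrict_ne_zero (P : Measure Ω) [IsFiniteMeasure P] {t : Set Ω}
    (h : crossDet (P.restrict t) X Y ≠ 0) : 0 < pr P t := by
  refine ENNReal.toReal_pos (fun ht => h ?_) (measure_ne_top P t)
  rw [Measure.restrict_eq_zero.2 ht, crossDet_zero]

lemma pr_restrict_eq_cpr_mul (P : Measure Ω) [IsFiniteMeasure P] {s t : Set Ω}
    (hs : MeasurableSet s) :
    pr (P.restrict t) s = cpr P t s * pr P s := by
  rw [cpr, pr, pr, pr, ← ENNReal.toReal_mul, cond_mul_eq_inter hs, Measure.restrict_apply hs,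
    Set.inter_comm]

lemma ProbabilityTheory.IndepFun.pr_ev_inter {P : Measure Ω} (h : IndepFun X Y P) (x y : ℝ) :
    pr P (ev X x ∩ ev Y y) = pr P (ev X x) * pr P (ev Y y) := by
  rw [pr, pr, pr, ← ENNReal.toReal_mul]
  exact congrArg ENNReal.toReal
    (h.measure_inter_preimage_eq_mul _ _ (measurableSet_singleton x) (measurableSet_singleton y))

lemma crossDet_restrict_eq_of_indepFun (hX : IsBin X) (hY : IsBin Y) {P : Measure Ω}
    [IsFiniteMeasure P] (hind : IndepFun X Y P) (t : Set Ω) :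
    crossDet (P.restrict t) X Y =
      (cpr P t (ev X 1 ∩ ev Y 1) * cpr P t (ev X 0 ∩ ev Y 0)
        - cpr P t (ev X 1 ∩ ev Y 0) * cpr P t (ev X 0 ∩ ev Y 1))
        * (pr P (ev X 1) * pr P (ev X 0) * (pr P (ev Y 1) * pr P (ev Y 0))) := by
  have hcell (x y : ℝ) := (hX.measurableSet_ev x).inter (hY.measurableSet_ev y)
  simp only [crossDet, pr_restrict_eq_cpr_mul P (hcell _ _), hind.pr_ev_inter]
  ring

lemma cpr_ev_zero {C : Ω → ℝ} (hC : IsBin C) (P : Measure Ω) [IsFiniteMeasure P] {s : Set Ω}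
    (hs : pr P s ≠ 0) : cpr P (ev C 0) s = 1 - cpr P (ev C 1) s := by
  have := cond_isProbabilityMeasure (μ := P) (ENNReal.toReal_ne_zero.1 hs).1
  rw [cpr, cpr, pr_eq_measureReal, pr_eq_measureReal, hC.ev_zero,
    probReal_compl_eq_one_sub (hC.measurableSet_ev 1)]

/-- Corollary 2 on the sign of V-bias: under qualitative interaction of `X` and `Y` on `C`,
V-bias is positive for one level of `C` and negative for the other. -/
theorem V_bias_sign_qualitative_interaction (P : Measure Ω) [IsProbabilityMeasure P]
    (X Y C : Ω → ℝ) (hX : IsBin X) (hY : IsBin Y) (hC : IsBin C)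
    (hindep : IndepFun X Y P)
    (hX1 : 0 < pr P (ev X 1)) (hX1' : pr P (ev X 1) < 1)
    (hY1 : 0 < pr P (ev Y 1)) (hY1' : pr P (ev Y 1) < 1)
    (hq1 : cpr P (ev C 1) (ev X 1 ∩ ev Y 1) > cpr P (ev C 1) (ev X 0 ∩ ev Y 1))
    (hq0 : cpr P (ev C 1) (ev X 1 ∩ ev Y 0) < cpr P (ev C 1) (ev X 0 ∩ ev Y 0)) :
    0 < pr P (ev C 1) ∧ 0 < pr P (ev C 0) ∧
      covCond P X Y (ev C 1) > 0 ∧ covCond P X Y (ev C 0) < 0 := by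
  have hX0 : 0 < pr P (ev X 0) := by rw [hX.pr_ev_zero]; linarith
  have hY0 : 0 < pr P (ev Y 0) := by rw [hY.pr_ev_zero]; linarith
  have hcell (x y : ℝ) (hx : 0 < pr P (ev X x)) (hy : 0 < pr P (ev Y y)) :
      pr P (ev X x ∩ ev Y y) ≠ 0 := by
    rw [hindep.pr_ev_inter]; positivity
  have hQ : 0 < pr P (ev X 1) * pr P (ev X 0) * (pr P (ev Y 1) * pr P (ev Y 0)) := by positivity
  have hD1 : 0 < crossDet (P.restrict (ev C 1)) X Y := by
    rw [crossDet_restrict_eq_of_indepFun hX hY hindep]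
    have := mul_lt_mul'' hq0 hq1 (pr_nonneg _ _) (pr_nonneg _ _)
    exact mul_pos (by linarith) hQ
  have hD0 : crossDet (P.restrict (ev C 0)) X Y < 0 := by
    rw [crossDet_restrict_eq_of_indepFun hX hY hindep, cpr_ev_zero hC P (hcell 1 1 hX1 hY1),
      cpr_ev_zero hC P (hcell 1 0 hX1 hY0), cpr_ev_zero hC P (hcell 0 1 hX0 hY1),
      cpr_ev_zero hC P (hcell 0 0 hX0 hY0)]
    have := mul_lt_mul'' (sub_lt_sub_left hq1 1) (sub_lt_sub_left hq0 1)
      (sub_nonneg.2 (cpr_le_one _ _ _)) (sub_nonneg.2 (cpr_le_one _ _ _))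
    exact mul_neg_of_neg_of_pos (by linarith) hQ
  have hC1 := pr_pos_of_crossDet_restrict_ne_zero P hD1.ne'
  have hC0 := pr_pos_of_crossDet_restrict_ne_zero P hD0.ne
  refine ⟨hC1, hC0, ?_, ?_⟩
  · rw [covCond_eq_crossDet_restrict_div hX hY]
    exact div_pos hD1 (pow_pos hC1 2)
  · rw [covCond_eq_crossDet_restrict_div hX hY]
    exact div_neg_of_neg_of_pos hD0 (pow_pos hC0 2)
end

section
/- Assume the left-sided M structure. Let c ∈ {0,1} with P(X=x, C=c) > 0 and P(A=a, C=c) > 0 for all x, a ∈ {0,1}. Then P(Y=1 | X=1, C=c) − P(Y=1 | X=0, C=c) = [ P(X=1 | A=1) − P(X=1 | A=0) ] · [ P(Y=1 | A=1, C=c) − P(Y=1 | A=0, C=c) ] · var(A | C=c) / var(X | C=c); that is, the extended collider bias on the risk difference scale equals the embedded V-bias risk difference multiplied by the risk difference representing the effect of A on X and by the variance ratio var(A | C=c)/var(X | C=c). -/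
open MeasureTheory ProbabilityTheory

variable {Ω : Type*} [MeasurableSpace Ω]

/-! In the M structure `X` depends on `(Y, C)` only through `A`: summing the factorization over
`x` gives `P(X=x, A=a, Y=y, C=γ) = P(X=x | A=a) P(A=a, Y=y, C=γ)`. Hence `P(X=x, C=c)` and
`P(Y=1, X=x, C=c)` are mixtures, with the same weights `P(X=x | A=a)`, of `P(A=a, C=c)` and
`P(Y=1, A=a, C=c)`. The risk difference across `x` is then a 2×2 determinant of a product of
matrices, so it factors into the determinant of the weights, `P(X=1|A=1) − P(X=1|A=0)`, times the
determinant giving the risk difference across `a`; the leftover normalizations are the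
Bernoulli variances `P(A=1|c) P(A=0|c)` and `P(X=1|c) P(X=0|c)`. -/

section Events

variable {P : Measure Ω} {Z : Ω → ℝ}

lemma measurableSet_ev (hZ : Measurable Z) (z : ℝ) : MeasurableSet (ev Z z) :=
  hZ (measurableSet_singleton z)

lemma IsBin.ev_one_eq_compl (hZ : IsBin Z) : ev Z 1 = (ev Z 0)ᶜ := by
  ext ω
  rcases hZ.2 ω with h | h <;> simp [ev, h]

lemma IsBin.eq_indicator_s16 (hZ : IsBin Z) : Z = (ev Z 1).indicator 1 := by
  ext ω
  rcases hZ.2 ω with h | h <;> simp [ev, h]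

lemma pr_ev_zero_inter_add_pr_ev_one_inter [IsFiniteMeasure P] (hZ : IsBin Z) (s : Set Ω) :
    pr P (ev Z 0 ∩ s) + pr P (ev Z 1 ∩ s) = pr P s := by
  rw [hZ.ev_one_eq_compl, Set.inter_comm, Set.inter_comm _ s, ← Set.sdiff_eq]
  exact measureReal_inter_add_sdiff (measurableSet_ev hZ.1 0)

lemma cpr_eq_div {t : Set Ω} (ht : MeasurableSet t) (s : Set Ω) :
    cpr P s t = pr P (s ∩ t) / pr P t := by
  rw [cpr, pr, cond_apply ht, ENNReal.toReal_mul, ENNReal.toReal_inv, Set.inter_comm,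
    div_eq_inv_mul, pr, pr]

lemma cpr_ev_zero_add_cpr_ev_one [IsFiniteMeasure P] (hZ : IsBin Z) {t : Set Ω}
    (ht : MeasurableSet t) (hPt : pr P t ≠ 0) :
    cpr P (ev Z 0) t + cpr P (ev Z 1) t = 1 := by
  rw [cpr_eq_div ht, cpr_eq_div ht, ← add_div, pr_ev_zero_inter_add_pr_ev_one_inter hZ,
    div_self hPt]

lemma integral_isBin (hZ : IsBin Z) : ∫ ω, Z ω ∂P = pr P (ev Z 1) := by
  rw [hZ.eq_indicator_s16, integral_indicator_one (measurableSet_ev hZ.1 1), ← hZ.eq_indicator_s16]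
  rfl

lemma rcov_self_of_isBin [IsProbabilityMeasure P] (hZ : IsBin Z) :
    rcov P Z Z = pr P (ev Z 1) * pr P (ev Z 0) := by
  have hZ_sq : ∀ ω, (Z ω - pr P (ev Z 1)) * (Z ω - pr P (ev Z 1)) =
      (1 - 2 * pr P (ev Z 1)) * Z ω + pr P (ev Z 1) ^ 2 := fun ω => by
    rcases hZ.2 ω with h | h <;> rw [h] <;> ring
  have hZ_int : Integrable Z P := by
    rw [hZ.eq_indicator_s16]
    exact (integrable_const 1).indicator (measurableSet_ev hZ.1 1)
  have h_total : pr P (ev Z 0) + pr P (ev Z 1) = 1 := by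
    simpa [pr] using pr_ev_zero_inter_add_pr_ev_one_inter (P := P) hZ Set.univ
  rw [rcov, integral_isBin hZ]
  simp_rw [hZ_sq]
  rw [integral_add (hZ_int.const_mul _) (integrable_const _), integral_const_mul,
    integral_isBin hZ, integral_const, probReal_univ, one_smul]
  linear_combination -pr P (ev Z 1) * h_total

lemma varCond_of_isBin [IsFiniteMeasure P] (hZ : IsBin Z) {t : Set Ω} (hPt : pr P t ≠ 0) :
    varCond P Z t = cpr P (ev Z 1) t * cpr P (ev Z 0) t := by
  have : IsProbabilityMeasure P[|t] := cond_isProbabilityMeasure fun h => hPt (by simp [pr, h])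
  exact rcov_self_of_isBin hZ

end Events

/-- `X` and the event `s` are conditionally independent given `A`. -/
def CondIndepEvent (P : Measure Ω) (X A : Ω → ℝ) (s : Set Ω) : Prop :=
  ∀ a x : ℝ, (a = 0 ∨ a = 1) → (x = 0 ∨ x = 1) →
    pr P (ev X x ∩ ev A a ∩ s) = cpr P (ev X x) (ev A a) * pr P (ev A a ∩ s)

section CondIndepEvent

variable {P : Measure Ω} [IsFiniteMeasure P] {A X Y C : Ω → ℝ} {s : Set Ω}

lemma condIndepEvent_of_factorization (hA : Measurable A) (hX : IsBin X)
    (hfact : ∀ a y x γ : ℝ, (a = 0 ∨ a = 1) → (y = 0 ∨ y = 1) → (x = 0 ∨ x = 1) →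
      (γ = 0 ∨ γ = 1) →
      pr P (ev A a ∩ ev Y y ∩ ev X x ∩ ev C γ) =
        pr P (ev A a) * pr P (ev Y y) * cpr P (ev X x) (ev A a) *
          cpr P (ev C γ) (ev A a ∩ ev Y y))
    {y γ : ℝ} (hy : y = 0 ∨ y = 1) (hγ : γ = 0 ∨ γ = 1) :
    CondIndepEvent P X A (ev Y y ∩ ev C γ) := by
  intro a x ha hx
  have h_joint : ∀ x', (x' = 0 ∨ x' = 1) → pr P (ev X x' ∩ ev A a ∩ (ev Y y ∩ ev C γ)) =
      pr P (ev A a) * pr P (ev Y y) * cpr P (ev X x') (ev A a) *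
        cpr P (ev C γ) (ev A a ∩ ev Y y) := fun x' hx' => by
    rw [← hfact a y x' γ ha hy hx' hγ]
    congr 1
    ac_rfl
  have h_marginal : pr P (ev A a ∩ (ev Y y ∩ ev C γ)) = pr P (ev A a) * pr P (ev Y y) *
      (cpr P (ev X 0) (ev A a) + cpr P (ev X 1) (ev A a)) *
        cpr P (ev C γ) (ev A a ∩ ev Y y) := by
    rw [← pr_ev_zero_inter_add_pr_ev_one_inter hX, ← Set.inter_assoc (ev X 0),
      ← Set.inter_assoc (ev X 1), h_joint 0 (.inl rfl), h_joint 1 (.inr rfl)]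
    ring
  rw [h_joint x hx, h_marginal]
  -- if `P(A=a) = 0`, both sides vanish through the factor `P(A=a)`
  rcases eq_or_ne (pr P (ev A a)) 0 with hPa | hPa
  · simp [hPa]
  · rw [cpr_ev_zero_add_cpr_ev_one hX (measurableSet_ev hA a) hPa]
    ring

lemma CondIndepEvent.of_split (hY : IsBin Y)
    (h : ∀ y, (y = 0 ∨ y = 1) → CondIndepEvent P X A (ev Y y ∩ s)) :
    CondIndepEvent P X A s := by
  intro a x ha hx
  rw [← pr_ev_zero_inter_add_pr_ev_one_inter hY (ev X x ∩ ev A a ∩ s),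
    ← pr_ev_zero_inter_add_pr_ev_one_inter hY (ev A a ∩ s), Set.inter_left_comm (ev Y 0),
    Set.inter_left_comm (ev Y 1), Set.inter_left_comm (ev Y 0), Set.inter_left_comm (ev Y 1),
    h 0 (.inl rfl) a x ha hx, h 1 (.inr rfl) a x ha hx, mul_add]

lemma CondIndepEvent.pr_ev_inter (h : CondIndepEvent P X A s) (hA : IsBin A) {x : ℝ}
    (hx : x = 0 ∨ x = 1) :
    pr P (ev X x ∩ s) = cpr P (ev X x) (ev A 0) * pr P (ev A 0 ∩ s) +
      cpr P (ev X x) (ev A 1) * pr P (ev A 1 ∩ s) := by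
  rw [← pr_ev_zero_inter_add_pr_ev_one_inter hA, ← h 0 x (.inl rfl) hx, ← h 1 x (.inr rfl) hx,
    ← Set.inter_assoc, ← Set.inter_assoc, Set.inter_comm (ev A 0), Set.inter_comm (ev A 1)]

end CondIndepEvent

lemma mixture_risk_difference {p₀ p₁ q₀ q₁ m₀ m₁ n₀ n₁ D₀ D₁ N₀ N₁ : ℝ}
    (hpq₀ : q₀ + p₀ = 1) (hpq₁ : q₁ + p₁ = 1)
    (hD₀ : D₀ = q₀ * m₀ + q₁ * m₁) (hD₁ : D₁ = p₀ * m₀ + p₁ * m₁)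
    (hN₀ : N₀ = q₀ * n₀ + q₁ * n₁) (hN₁ : N₁ = p₀ * n₀ + p₁ * n₁)
    (hm₀ : m₀ ≠ 0) (hm₁ : m₁ ≠ 0) (hD₀_ne : D₀ ≠ 0) (hD₁_ne : D₁ ≠ 0) :
    N₁ / D₁ - N₀ / D₀ = (p₁ - p₀) * (n₁ / m₁ - n₀ / m₀) * (m₁ * m₀ / (D₁ * D₀)) := by
  obtain rfl : q₀ = 1 - p₀ := by linarith
  obtain rfl : q₁ = 1 - p₁ := by linarith
  subst hN₀ hN₁
  field_simp
  rw [hD₀, hD₁]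
  ring

theorem leftM_bias_rd_general (P : Measure Ω) [IsProbabilityMeasure P]
    (A Y X C : Ω → ℝ) (hA : IsBin A) (hY : IsBin Y) (hX : IsBin X) (hC : IsBin C)
    (hfact : ∀ a y x γ : ℝ, (a = 0 ∨ a = 1) → (y = 0 ∨ y = 1) → (x = 0 ∨ x = 1) →
      (γ = 0 ∨ γ = 1) →
      pr P (ev A a ∩ ev Y y ∩ ev X x ∩ ev C γ) =
        pr P (ev A a) * pr P (ev Y y) * cpr P (ev X x) (ev A a) *
          cpr P (ev C γ) (ev A a ∩ ev Y y))
    (c : ℝ) (hc : c = 0 ∨ c = 1)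
    (hXc : ∀ x : ℝ, (x = 0 ∨ x = 1) → 0 < pr P (ev X x ∩ ev C c))
    (hAc : ∀ a : ℝ, (a = 0 ∨ a = 1) → 0 < pr P (ev A a ∩ ev C c)) :
    cpr P (ev Y 1) (ev X 1 ∩ ev C c) - cpr P (ev Y 1) (ev X 0 ∩ ev C c) =
      (cpr P (ev X 1) (ev A 1) - cpr P (ev X 1) (ev A 0)) *
        (cpr P (ev Y 1) (ev A 1 ∩ ev C c) - cpr P (ev Y 1) (ev A 0 ∩ ev C c)) *
        (varCond P A (ev C c) / varCond P X (ev C c)) := by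
  have hCc := measurableSet_ev hC.1 c
  have hCI : CondIndepEvent P X A (ev C c) :=
    .of_split hY fun _ hy => condIndepEvent_of_factorization hA.1 hX hfact hy hc
  have hCI_Y : CondIndepEvent P X A (ev Y 1 ∩ ev C c) :=
    condIndepEvent_of_factorization hA.1 hX hfact (.inr rfl) hc
  have hPA : ∀ a, (a = 0 ∨ a = 1) → pr P (ev A a) ≠ 0 := fun a ha =>
    ((hAc a ha).trans_le (measureReal_mono Set.inter_subset_left)).ne'
  have hPC : pr P (ev C c) ≠ 0 :=
    ((hAc 1 (.inr rfl)).trans_le (measureReal_mono Set.inter_subset_right)).ne'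
  have hN : ∀ x, (x = 0 ∨ x = 1) → pr P (ev Y 1 ∩ (ev X x ∩ ev C c)) =
      cpr P (ev X x) (ev A 0) * pr P (ev Y 1 ∩ (ev A 0 ∩ ev C c)) +
        cpr P (ev X x) (ev A 1) * pr P (ev Y 1 ∩ (ev A 1 ∩ ev C c)) := fun x hx => by
    simp only [Set.inter_left_comm (ev Y 1)]
    exact hCI_Y.pr_ev_inter hA hx
  simp only [varCond_of_isBin hA hPC, varCond_of_isBin hX hPC, cpr_eq_div hCc,
    cpr_eq_div ((measurableSet_ev hX.1 _).inter hCc),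
    cpr_eq_div ((measurableSet_ev hA.1 _).inter hCc)]
  rw [mixture_risk_difference
    (cpr_ev_zero_add_cpr_ev_one hX (measurableSet_ev hA.1 0) (hPA 0 (.inl rfl)))
    (cpr_ev_zero_add_cpr_ev_one hX (measurableSet_ev hA.1 1) (hPA 1 (.inr rfl)))
    (hCI.pr_ev_inter hA (.inl rfl)) (hCI.pr_ev_inter hA (.inr rfl))
    (hN 0 (.inl rfl)) (hN 1 (.inr rfl)) (hAc 0 (.inl rfl)).ne' (hAc 1 (.inr rfl)).ne'
    (hXc 0 (.inl rfl)).ne' (hXc 1 (.inr rfl)).ne']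
  congr 1
  field_simp

/-- Left-sided M structure: the extended collider bias on the risk difference scale equals the
embedded V-bias risk difference times the risk difference for the effect of `A` on `X` and the
variance ratio `var(A | C=c) / var(X | C=c)`. -/
theorem leftM_bias_rd (P : Measure Ω) [IsProbabilityMeasure P]
    (A Y X C : Ω → ℝ) (hA : IsBin A) (hY : IsBin Y) (hX : IsBin X) (hC : IsBin C)
    (hA1 : 0 < pr P (ev A 1)) (hA1' : pr P (ev A 1) < 1)
    (hY1 : 0 < pr P (ev Y 1)) (hY1' : pr P (ev Y 1) < 1)
    (hfact : ∀ a y x γ : ℝ, (a = 0 ∨ a = 1) → (y = 0 ∨ y = 1) → (x = 0 ∨ x = 1) →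
      (γ = 0 ∨ γ = 1) →
      pr P (ev A a ∩ ev Y y ∩ ev X x ∩ ev C γ) =
        pr P (ev A a) * pr P (ev Y y) * cpr P (ev X x) (ev A a) *
          cpr P (ev C γ) (ev A a ∩ ev Y y))
    (c : ℝ) (hc : c = 0 ∨ c = 1)
    (hXc : ∀ x : ℝ, (x = 0 ∨ x = 1) → 0 < pr P (ev X x ∩ ev C c))
    (hAc : ∀ a : ℝ, (a = 0 ∨ a = 1) → 0 < pr P (ev A a ∩ ev C c)) :
    cpr P (ev Y 1) (ev X 1 ∩ ev C c) - cpr P (ev Y 1) (ev X 0 ∩ ev C c) =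
      (cpr P (ev X 1) (ev A 1) - cpr P (ev X 1) (ev A 0)) *
        (cpr P (ev Y 1) (ev A 1 ∩ ev C c) - cpr P (ev Y 1) (ev A 0 ∩ ev C c)) *
        (varCond P A (ev C c) / varCond P X (ev C c)) :=
  leftM_bias_rd_general P A Y X C hA hY hX hC hfact c hc hXc hAc
end
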